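/- Let M N : ℕ be positive, A : Matrix (Fin M) (Fin M) ℂ and B : Matrix (Fin N) (Fin N) ℂ be Hermitian matrices (hA : A.IsHermitian, hB : B.IsHermitian). Then A ⊞ B is Hermitian, and the multiset of its eigenvalues (with multiplicity) equals the multiset of all pairwise sums of eigenvalues of A and B: Finset.univ.val.map (hAB.eigenvalues) = Finset.univ.val.map (fun p : Fin M × Fin N => hA.eigenvalues p.1 + hB.eigenvalues p.2), where hAB is the proof that A ⊞ B is Hermitian. -/

import Mathlib

/-- The Kronecker sum `A ⊞ B = A ⊗ I_N + I_M ⊗ B` of two square complex matrices. -/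
def kronSum {M N : ℕ} (A : Matrix (Fin M) (Fin M) ℂ) (B : Matrix (Fin N) (Fin N) ℂ) :
    Matrix (Fin M × Fin N) (Fin M × Fin N) ℂ :=
  fun p q => (if p.2 = q.2 then A p.1 q.1 else 0) + (if p.1 = q.1 then B p.2 q.2 else 0)

/-!
Diagonalize `A = U D Uᴴ` and `B = V E Vᴴ` with unitary `U`, `V`. Conjugating by the unitary
`U ⊗ V` turns `A ⊞ B = A ⊗ I + I ⊗ B` into `D ⊗ I + I ⊗ E`, which is diagonal with entries
`λᵢ + μⱼ`. So the characteristic polynomial of `A ⊞ B` is `∏ (X - (λᵢ + μⱼ))`, and its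
eigenvalues, being the roots of that polynomial, are the sums `λᵢ + μⱼ` with multiplicity.
-/

open Matrix Polynomial
open scoped Kronecker

theorem Polynomial.roots_finset_prod_X_sub_C {R ι : Type*} [CommRing R] [IsDomain R]
    (s : Finset ι) (f : ι → R) : (∏ i ∈ s, (X - C (f i))).roots = s.val.map f := by
  simpa [Multiset.map_map, Function.comp_def] using roots_multiset_prod_X_sub_C (s.val.map f)

namespace Matrix

variable {m n : Type*} [DecidableEq m] [DecidableEq n]

theorem mul_kronecker_one_add_one_kronecker_mul [Fintype m] [Fintype n]
    {R : Type*} [CommSemiring R] {U U' : Matrix m m R} {V V' : Matrix n n R}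
    (hU : U * U' = 1) (hV : V * V' = 1) (A : Matrix m m R) (B : Matrix n n R) :
    (U ⊗ₖ V) * (A ⊗ₖ 1 + 1 ⊗ₖ B) * (U' ⊗ₖ V') = (U * A * U') ⊗ₖ 1 + 1 ⊗ₖ (V * B * V') := by
  simp only [Matrix.mul_add, Matrix.add_mul, ← mul_kronecker_mul, Matrix.mul_one, hU, hV]

theorem diagonal_kronecker_one_add_one_kronecker_diagonal {R : Type*} [CommSemiring R]
    (d : m → R) (e : n → R) :
    diagonal d ⊗ₖ (1 : Matrix n n R) + (1 : Matrix m m R) ⊗ₖ diagonal e =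
      diagonal fun p => d p.1 + e p.2 := by
  simp only [← diagonal_one, diagonal_kronecker_diagonal, diagonal_add, mul_one, one_mul]

theorem IsHermitian.kronecker_one_add_one_kronecker {R : Type*} [CommSemiring R] [StarRing R]
    {A : Matrix m m R} {B : Matrix n n R} (hA : A.IsHermitian) (hB : B.IsHermitian) :
    (A ⊗ₖ 1 + 1 ⊗ₖ B).IsHermitian := by
  rw [IsHermitian, conjTranspose_add, conjTranspose_kronecker, conjTranspose_kronecker,
    conjTranspose_one, conjTranspose_one, hA.eq, hB.eq]

theorem IsHermitian.charpoly_kronecker_one_add_one_kronecker [Fintype m] [Fintype n]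
    {𝕜 : Type*} [RCLike 𝕜] {A : Matrix m m 𝕜} {B : Matrix n n 𝕜}
    (hA : A.IsHermitian) (hB : B.IsHermitian) :
    (A ⊗ₖ 1 + 1 ⊗ₖ B).charpoly =
      ∏ p : m × n, (X - C ((hA.eigenvalues p.1 + hB.eigenvalues p.2 : ℝ) : 𝕜)) := by
  set U := hA.eigenvectorUnitary
  set V := hB.eigenvectorUnitary
  have hconj : A ⊗ₖ 1 + 1 ⊗ₖ B = ((U : Matrix m m 𝕜) ⊗ₖ (V : Matrix n n 𝕜)) *
      (diagonal (RCLike.ofReal ∘ hA.eigenvalues) ⊗ₖ 1 +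
        1 ⊗ₖ diagonal (RCLike.ofReal ∘ hB.eigenvalues)) *
      ((star U : Matrix m m 𝕜) ⊗ₖ (star V : Matrix n n 𝕜)) := by
    conv_lhs => rw [hA.spectral_theorem, hB.spectral_theorem]
    rw [Unitary.conjStarAlgAut_apply, Unitary.conjStarAlgAut_apply]
    exact (mul_kronecker_one_add_one_kronecker_mul (by simp) (by simp) _ _).symm
  have hinv : ((star U : Matrix m m 𝕜) ⊗ₖ (star V : Matrix n n 𝕜)) * (U ⊗ₖ V) = 1 := by
    simp [← mul_kronecker_mul]
  rw [hconj, charpoly_mul_comm, ← Matrix.mul_assoc, hinv, Matrix.one_mul,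
    diagonal_kronecker_one_add_one_kronecker_diagonal, charpoly_diagonal]
  simp

end Matrix

theorem kronSum_eq_kronecker {M N : ℕ} (A : Matrix (Fin M) (Fin M) ℂ)
    (B : Matrix (Fin N) (Fin N) ℂ) : kronSum A B = A ⊗ₖ 1 + 1 ⊗ₖ B := by
  ext p q
  simp [kronSum, one_apply, mul_comm]

theorem kronSum_isHermitian_and_eigenvalues_general
    (M N : ℕ)
    (A : Matrix (Fin M) (Fin M) ℂ) (B : Matrix (Fin N) (Fin N) ℂ)
    (hA : A.IsHermitian) (hB : B.IsHermitian) :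
    ∃ hAB : (kronSum A B).IsHermitian,
      Finset.univ.val.map hAB.eigenvalues =
        Finset.univ.val.map
          (fun p : Fin M × Fin N => hA.eigenvalues p.1 + hB.eigenvalues p.2) := by
  have hAB : (kronSum A B).IsHermitian :=
    kronSum_eq_kronecker A B ▸ hA.kronecker_one_add_one_kronecker hB
  refine ⟨hAB, Multiset.map_injective (RCLike.ofReal_injective (K := ℂ)) ?_⟩
  rw [Multiset.map_map, Multiset.map_map, ← hAB.roots_charpoly_eq_eigenvalues,
    kronSum_eq_kronecker, hA.charpoly_kronecker_one_add_one_kronecker hB,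
    roots_finset_prod_X_sub_C]
  rfl

theorem kronSum_isHermitian_and_eigenvalues
    (M N : ℕ) (hM : 0 < M) (hN : 0 < N)
    (A : Matrix (Fin M) (Fin M) ℂ) (B : Matrix (Fin N) (Fin N) ℂ)
    (hA : A.IsHermitian) (hB : B.IsHermitian) :
    ∃ hAB : (kronSum A B).IsHermitian,
      Finset.univ.val.map hAB.eigenvalues =
        Finset.univ.val.map
          (fun p : Fin M × Fin N => hA.eigenvalues p.1 + hB.eigenvalues p.2) :=
  kronSum_isHermitian_and_eigenvalues_general M N A B hA hB
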